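/- Let n ≥ 1 be an odd integer and let G be the fat fan of order n with base xyz, with apex y' and path vertices v_1, …, v_n. Let L be a list assignment with |L(y')| ≥ 5 and |L(v_i)| ≥ 3 for 1 ≤ i ≤ n. Then every precoloring of the base xyz extends to an L-coloring of G. -/

import Mathlib

/-- Vertices of the fat fan of order `n`: the base `x, y, z`, the apex `y'`,
and the path vertices `v 0, …, v (n-1)` (written `v_1, …, v_n` in the paper). -/
inductive FFVert (n : ℕ) : Type where
  | x | y | z | apex
  | v (i : Fin n)
deriving DecidableEq

/-- The fat fan of order `n` with base `x y z` and apex `y'`. -/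
def fatFan (n : ℕ) : SimpleGraph (FFVert n) :=
  SimpleGraph.fromEdgeSet (
    {s(FFVert.x, FFVert.y), s(FFVert.y, FFVert.z),
     s(FFVert.x, FFVert.apex), s(FFVert.y, FFVert.apex), s(FFVert.z, FFVert.apex)} ∪
    {e | ∃ i : Fin n, e = s(FFVert.apex, FFVert.v i)} ∪
    {e | ∃ i : Fin n, (i : ℕ) = 0 ∧ e = s(FFVert.x, FFVert.v i)} ∪
    {e | ∃ i j : Fin n, (i : ℕ) + 1 = (j : ℕ) ∧ e = s(FFVert.v i, FFVert.v j)} ∪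
    {e | ∃ i : Fin n, (i : ℕ) = n - 1 ∧ e = s(FFVert.v i, FFVert.z)})

/-- The precoloring of the base `x y z` by the colors `cx, cy, cz` extends to
an `L`-coloring of the fat fan of order `n`. -/
def ExtendsFF {n : ℕ} {α : Type*} (L : FFVert n → Finset α) (cx cy cz : α) : Prop :=
  ∃ ψ : FFVert n → α,
    (∀ u w : FFVert n, (fatFan n).Adj u w → ψ u ≠ ψ w) ∧
    ψ FFVert.x = cx ∧ ψ FFVert.y = cy ∧ ψ FFVert.z = cz ∧
    (∀ w : FFVert n, w ≠ FFVert.x → w ≠ FFVert.y → w ≠ FFVert.z → ψ w ∈ L w)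

/-!
Choose two colors `a ≠ a'` in the list of the apex avoiding the base colors. Once the apex has
color `a`, the path `x v_1 … v_n z` remains, with lists `L(v_i) \ {a}` of size at least two and
precolored ends; such a path fails to be colorable only if its lists form a rigid chain
`{c_0, c_1}, {c_1, c_2}, …, {c_{n-1}, c_n}` with `c_0 = φ(x)` and `c_n = φ(z)`. If this happens
for both `a` and `a'`, every `L(v_i)` is a 3-set containing `a` and `a'`, and comparing the two
chains gives `c_i = a'` for every odd `i`. As `n` is odd, `φ(z) = a'`, which is not the case.
-/

open Finset

section PathColoring

variable {α : Type*} {S : ℕ → Finset α} {p : α} {n : ℕ}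

variable (S p) in
/-- Vertex `0` of the path `0, 1, …, n` is precolored by `p`; vertex `i ≥ 1` takes its color
from `S i`. -/
def IsPathColoring (n : ℕ) (g : ℕ → α) : Prop :=
  g 0 = p ∧ ∀ i < n, g (i + 1) ∈ S (i + 1) ∧ g i ≠ g (i + 1)

theorem IsPathColoring.update {g : ℕ → α} (hg : IsPathColoring S p n g) {x : α}
    (hx : x ∈ S (n + 1)) (hne : g n ≠ x) :
    IsPathColoring S p (n + 1) (Function.update g (n + 1) x) := by
  refine ⟨by simpa using hg.1, fun i hi => ?_⟩
  rcases Nat.lt_succ_iff_lt_or_eq.mp hi with hi | rfl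
  · simpa [Function.update_of_ne (show i ≠ n + 1 by omega),
      Function.update_of_ne (show i + 1 ≠ n + 1 by omega)] using hg.2 i hi
  · simpa using ⟨hx, hne⟩

variable [DecidableEq α]

variable (S p) in
def IsPairChain (n : ℕ) (c : ℕ → α) : Prop :=
  c 0 = p ∧ ∀ i < n, S (i + 1) = {c i, c (i + 1)}

theorem IsPairChain.update {c : ℕ → α} (hc : IsPairChain S p n c) {x : α}
    (hx : S (n + 1) = {c n, x}) :
    IsPairChain S p (n + 1) (Function.update c (n + 1) x) := by
  refine ⟨by simpa using hc.1, fun i hi => ?_⟩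
  rcases Nat.lt_succ_iff_lt_or_eq.mp hi with hi | rfl
  · simpa [Function.update_of_ne (show i ≠ n + 1 by omega),
      Function.update_of_ne (show i + 1 ≠ n + 1 by omega)] using hc.2 i hi
  · simpa using hx

theorem exists_isPathColoring (hS : ∀ i < n, 2 ≤ #(S (i + 1))) :
    ∃ g, IsPathColoring S p n g := by
  induction n with
  | zero => exact ⟨fun _ => p, rfl, by simp⟩
  | succ n ih =>
    obtain ⟨g, hg⟩ := ih fun i hi => hS i (by omega)
    obtain ⟨x, hx⟩ : ((S (n + 1)).erase (g n)).Nonempty := by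
      rw [← card_pos]
      have := hS n (by omega)
      have := pred_card_le_card_erase (s := S (n + 1)) (a := g n)
      omega
    exact ⟨_, hg.update (mem_of_mem_erase hx) (ne_of_mem_erase hx).symm⟩

theorem Finset.exists_eq_pair_of_card_erase_lt_two {s : Finset α} {q : α} (hs : 2 ≤ #s)
    (hq : #(s.erase q) < 2) : ∃ r, r ≠ q ∧ s = {q, r} := by
  have hqs : q ∈ s := by
    by_contra h
    rw [erase_eq_of_notMem h] at hq
    omega
  have hcard : #(s.erase q) = 1 := by
    have := card_erase_of_mem hqs
    omega
  obtain ⟨r, hr⟩ := card_eq_one.mp hcard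
  refine ⟨r, ne_of_mem_erase (hr ▸ mem_singleton_self r), ?_⟩
  rw [← insert_erase hqs, hr]

theorem exists_isPathColoring_ne_or_isPairChain (hS : ∀ i < n, 2 ≤ #(S (i + 1))) (q : α) :
    (∃ g, IsPathColoring S p n g ∧ g n ≠ q) ∨ ∃ c, IsPairChain S p n c ∧ c n = q := by
  induction n generalizing q with
  | zero =>
    by_cases hpq : p = q
    · exact .inr ⟨fun _ => p, ⟨rfl, by simp⟩, hpq⟩
    · exact .inl ⟨fun _ => p, ⟨rfl, by simp⟩, hpq⟩
  | succ n ih =>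
    have hS' : ∀ i < n, 2 ≤ #(S (i + 1)) := fun i hi => hS i (by omega)
    by_cases hfree : 2 ≤ #((S (n + 1)).erase q)
    · obtain ⟨g, hg⟩ := exists_isPathColoring (p := p) hS'
      obtain ⟨x, hx⟩ : (((S (n + 1)).erase q).erase (g n)).Nonempty := by
        rw [← card_pos]
        have := pred_card_le_card_erase (s := (S (n + 1)).erase q) (a := g n)
        omega
      simp only [mem_erase] at hx
      exact .inl ⟨_, hg.update hx.2.2 (Ne.symm hx.1), by simpa using hx.2.1⟩
    · obtain ⟨r, hrq, hSr⟩ :=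
        exists_eq_pair_of_card_erase_lt_two (q := q) (hS n (by omega)) (by omega)
      rcases ih hS' r with ⟨g, hg, hgr⟩ | ⟨c, hc, rfl⟩
      · exact .inl ⟨_, hg.update (by simp [hSr]) hgr, by simpa using hrq⟩
      · exact .inr ⟨_, hc.update (by rw [hSr, pair_comm]), by simp⟩

theorem Finset.mem_and_ne_of_erase_eq_pair {T : Finset α} (hT : 3 ≤ #T) {a u w : α}
    (h : T.erase a = {u, w}) : a ∈ T ∧ u ≠ w := by
  constructor
  · by_contra ha
    rw [erase_eq_of_notMem ha] at h
    have := card_le_two (a := u) (b := w)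
    rw [← h] at this
    omega
  · rintro rfl
    have := pred_card_le_card_erase (s := T) (a := a)
    rw [h, insert_eq_self.mpr (mem_singleton_self u), card_singleton] at this
    omega

theorem Finset.eq_of_erase_eq_pair_of_eq {T : Finset α} (hT : 3 ≤ #T) {a a' s w w' : α}
    (haa' : a ≠ a') (h : T.erase a = {s, w}) (h' : T.erase a' = {s, w'}) (hsa' : s ≠ a') :
    w = a' ∧ w' = a := by
  have ha' : a' ∈ T.erase a := mem_erase.mpr ⟨haa'.symm, (mem_and_ne_of_erase_eq_pair hT h').1⟩
  have ha : a ∈ T.erase a' := mem_erase.mpr ⟨haa', (mem_and_ne_of_erase_eq_pair hT h).1⟩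
  have hsa : s ≠ a := ne_of_mem_erase (h ▸ mem_insert_self s {w})
  rw [h, mem_insert, mem_singleton] at ha'
  rw [h', mem_insert, mem_singleton] at ha
  exact ⟨(ha'.resolve_left hsa'.symm).symm, (ha.resolve_left hsa.symm).symm⟩

theorem Finset.eq_of_erase_eq_pair_of_swap {T : Finset α} (hT : 3 ≤ #T) {a a' w w' : α}
    (h : T.erase a = {a', w}) (h' : T.erase a' = {a, w'}) :
    w = w' ∧ w ≠ a ∧ w ≠ a' := by
  have hw : w ∈ T.erase a := h ▸ mem_insert_of_mem (mem_singleton_self w)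
  have hwa' : w ≠ a' := (mem_and_ne_of_erase_eq_pair hT h).2.symm
  have hw' : w ∈ T.erase a' := mem_erase.mpr ⟨hwa', mem_of_mem_erase hw⟩
  rw [h', mem_insert, mem_singleton] at hw'
  exact ⟨hw'.resolve_left (ne_of_mem_erase hw), ne_of_mem_erase hw, hwa'⟩

theorem IsPairChain.eq_of_odd {T : ℕ → Finset α} {a a' : α} {c c' : ℕ → α}
    (hT : ∀ i < n, 3 ≤ #(T (i + 1))) (haa' : a ≠ a') (hpa : p ≠ a) (hpa' : p ≠ a')
    (hc : IsPairChain (fun i => (T i).erase a) p n c)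
    (hc' : IsPairChain (fun i => (T i).erase a') p n c') (hn : Odd n) : c n = a' := by
  have key : ∀ i ≤ n,
      if Even i then c i = c' i ∧ c i ≠ a ∧ c i ≠ a' else c i = a' ∧ c' i = a := by
    intro i hi
    induction i with
    | zero => simpa [hc.1, hc'.1] using ⟨hpa, hpa'⟩
    | succ i ih =>
      have h := hc.2 i (by omega)
      have h' := hc'.2 i (by omega)
      have hTi := hT i (by omega)
      rcases Nat.even_or_odd i with hi | hi
      · obtain ⟨hcc', -, hca'⟩ := by simpa [hi] using ih (by omega)
        rw [← hcc'] at h'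
        simpa [Nat.even_add_one, hi] using eq_of_erase_eq_pair_of_eq hTi haa' h h' hca'
      · obtain ⟨hca', hc'a⟩ := by simpa [Nat.not_even_iff_odd.mpr hi] using ih (by omega)
        rw [hca'] at h
        rw [hc'a] at h'
        simpa [Nat.even_add_one, Nat.not_even_iff_odd.mpr hi]
          using eq_of_erase_eq_pair_of_swap hTi h h'
  have hcn := key n le_rfl
  rw [if_neg (Nat.not_even_iff_odd.mpr hn)] at hcn
  exact hcn.1

theorem exists_isPathColoring_erase_of_odd {T : ℕ → Finset α} (hT : ∀ i < n, 3 ≤ #(T (i + 1)))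
    (hn : Odd n) {a a' q : α} (haa' : a ≠ a') (hpa : p ≠ a) (hpa' : p ≠ a') (hqa' : q ≠ a') :
    ∃ c, (c = a ∨ c = a') ∧ ∃ g, IsPathColoring (fun i => (T i).erase c) p n g ∧ g n ≠ q := by
  have hS (e : α) : ∀ i < n, 2 ≤ #((T (i + 1)).erase e) := fun i hi => by
    have := pred_card_le_card_erase (s := T (i + 1)) (a := e)
    have := hT i hi
    omega
  rcases exists_isPathColoring_ne_or_isPairChain (S := fun i => (T i).erase a) (p := p)
      (hS a) q with hg | ⟨c, hc, hcq⟩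
  · exact ⟨a, .inl rfl, hg⟩
  rcases exists_isPathColoring_ne_or_isPairChain (S := fun i => (T i).erase a') (p := p)
      (hS a') q with hg | ⟨c', hc', -⟩
  · exact ⟨a', .inr rfl, hg⟩
  exact absurd (hcq ▸ hc.eq_of_odd hT haa' hpa hpa' hc' hn) hqa'

end PathColoring

theorem ne_of_sym2_eq {β γ : Type*} {f : β → γ} {u w a b : β} (h : s(u, w) = s(a, b))
    (hab : f a ≠ f b) : f u ≠ f w := by
  rcases Sym2.eq_iff.mp h with ⟨rfl, rfl⟩ | ⟨rfl, rfl⟩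
  exacts [hab, hab.symm]

section FatFan

variable {n : ℕ} {α : Type*}

/-- The lists of `v 0, …, v (n-1)`, placed at positions `1, …, n` of the path `x, v 0, …, v (n-1)`
(position `0` is the precolored `x`). -/
def FFVert.pathLists (L : FFVert n → Finset α) : ℕ → Finset α
  | 0 => ∅
  | i + 1 => if h : i < n then L (.v ⟨i, h⟩) else ∅

theorem FFVert.pathLists_succ (L : FFVert n → Finset α) (i : Fin n) :
    FFVert.pathLists L (i + 1) = L (.v i) := by
  simp [pathLists]

theorem extendsFF_of_isPathColoring [DecidableEq α] {L : FFVert n → Finset α} {cx cy cz c : α}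
    (hxy : cx ≠ cy) (hyz : cy ≠ cz) (hc : c ∈ L .apex \ {cx, cy, cz}) {g : ℕ → α}
    (hg : IsPathColoring (fun i => (FFVert.pathLists L i).erase c) cx n g) (hgz : g n ≠ cz) :
    ExtendsFF L cx cy cz := by
  simp only [mem_sdiff, mem_insert, mem_singleton, not_or] at hc
  obtain ⟨hcL, hcx, hcy, hcz⟩ := hc
  let ψ : FFVert n → α := fun w => match w with
    | .x => cx | .y => cy | .z => cz | .apex => c | .v i => g (i + 1)
  refine ⟨ψ, ?_, rfl, rfl, rfl, ?_⟩
  · intro u w huw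
    rw [fatFan, SimpleGraph.fromEdgeSet_adj] at huw
    simp only [Set.mem_union, Set.mem_insert_iff, Set.mem_singleton_iff] at huw
    rcases huw.1 with ((((h | h | h | h | h) | ⟨i, h⟩) | ⟨i, hi, h⟩) | ⟨i, j, hij, h⟩) | ⟨i, hi, h⟩
    · exact ne_of_sym2_eq (f := ψ) h hxy
    · exact ne_of_sym2_eq (f := ψ) h hyz
    · exact ne_of_sym2_eq (f := ψ) h (Ne.symm hcx)
    · exact ne_of_sym2_eq (f := ψ) h (Ne.symm hcy)
    · exact ne_of_sym2_eq (f := ψ) h (Ne.symm hcz)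
    · exact ne_of_sym2_eq (f := ψ) h (ne_of_mem_erase (hg.2 i i.isLt).1).symm
    · refine ne_of_sym2_eq (f := ψ) h ?_
      show cx ≠ g (i + 1)
      simpa [hi, hg.1] using (hg.2 0 (by omega)).2
    · refine ne_of_sym2_eq (f := ψ) h ?_
      show g (i + 1) ≠ g (j + 1)
      simpa [hij] using (hg.2 (i + 1) (by omega)).2
    · refine ne_of_sym2_eq (f := ψ) h ?_
      show g (i + 1) ≠ cz
      simpa [show (i : ℕ) + 1 = n by omega] using hgz
  · intro w hx hy hz
    cases w with
    | x | y | z => contradiction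
    | apex => exact hcL
    | v i => simpa [FFVert.pathLists_succ] using mem_of_mem_erase (hg.2 i i.isLt).1

end FatFan

theorem fatFan_odd_extends_general {n : ℕ} {α : Type*}
    (hodd : Odd n) (L : FFVert n → Finset α)
    (hapex : 5 ≤ (L FFVert.apex).card)
    (hlist : ∀ i : Fin n, 3 ≤ (L (FFVert.v i)).card)
    (cx cy cz : α) (hxy : cx ≠ cy) (hyz : cy ≠ cz) :
    ExtendsFF L cx cy cz := by
  classical
  have hfree : 1 < #(L .apex \ {cx, cy, cz}) := by
    have := le_card_sdiff {cx, cy, cz} (L .apex)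
    have := card_le_three (a := cx) (b := cy) (c := cz)
    omega
  obtain ⟨a, ha, a', ha', haa'⟩ := one_lt_card.mp hfree
  have hends {b : α} (hb : b ∈ L .apex \ {cx, cy, cz}) : cx ≠ b ∧ cz ≠ b := by
    simp only [mem_sdiff, mem_insert, mem_singleton, not_or] at hb
    exact ⟨Ne.symm hb.2.1, Ne.symm hb.2.2.2⟩
  have hT : ∀ i < n, 3 ≤ #(FFVert.pathLists L (i + 1)) := fun i hi =>
    FFVert.pathLists_succ L ⟨i, hi⟩ ▸ hlist ⟨i, hi⟩
  obtain ⟨c, hc, g, hg, hgz⟩ :=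
    exists_isPathColoring_erase_of_odd hT hodd haa' (hends ha).1 (hends ha').1 (hends ha').2
  exact extendsFF_of_isPathColoring hxy hyz (hc.elim (· ▸ ha) (· ▸ ha')) hg hgz

/-- Every precoloring of the base of a fat fan of odd order extends. -/
theorem fatFan_odd_extends {n : ℕ} {α : Type*}
    (hn : 1 ≤ n) (hodd : Odd n) (L : FFVert n → Finset α)
    (hapex : 5 ≤ (L FFVert.apex).card)
    (hlist : ∀ i : Fin n, 3 ≤ (L (FFVert.v i)).card)
    (cx cy cz : α) (hxy : cx ≠ cy) (hyz : cy ≠ cz) :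
    ExtendsFF L cx cy cz :=
  fatFan_odd_extends_general hodd L hapex hlist cx cy cz hxy hyz
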